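/- arXiv:quant-ph/0410051 — 9 statements merged into one kernel-verified Lean document; each statement's English description precedes it below -/
import Mathlib

section
/- Suppose there exist two events X₀, Y₀ ∈ Σ with dom(X₀) ∩ dom(Y₀) = ∅. Then dom(∅) = ∅ and dom(Ω) = ∅. -/
open Set

section LeastDomainOfDecidability

variable {Ω S : Type*} [MeasurableSpace Ω] {dom : Set Ω → Set S}

/-- `∅ = X ∩ Xᶜ`, and by (iii) both `X` and `Xᶜ` have domain `dom X`, so (ii) applies. -/
lemma dom_empty_subset
    (prop_ii : ∀ (Λ : Set (Set Ω)) (D : Set S), Λ.Countable →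
      (∀ X ∈ Λ, MeasurableSet X) → (∀ X ∈ Λ, dom X = D) → dom (⋂₀ Λ) ⊆ D)
    (prop_iii : ∀ X : Set Ω, MeasurableSet X → dom Xᶜ = dom X)
    {X : Set Ω} (hX : MeasurableSet X) : dom ∅ ⊆ dom X := by
  have hinter : ⋂₀ ({X, Xᶜ} : Set (Set Ω)) = ∅ := by simp [sInter_insert]
  rw [← hinter]
  exact prop_ii {X, Xᶜ} (dom X) ((countable_singleton _).insert _)
    (by rintro Y (rfl | rfl); exacts [hX, hX.compl])
    (by rintro Y (rfl | rfl); exacts [rfl, prop_iii X hX])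

end LeastDomainOfDecidability

/-- If there are two events `X₀`, `Y₀` with disjoint domains, then the empty event and
the whole history space `Ω` both have empty domain.  Properties (ii) and (iii) of the
least-domain-of-decidability function `dom` are assumed. -/
theorem stmt3 {Ω S : Type*} [MeasurableSpace Ω] (dom : Set Ω → Set S)
    (prop_ii : ∀ (Λ : Set (Set Ω)) (D : Set S), Λ.Countable →
      (∀ X ∈ Λ, MeasurableSet X) → (∀ X ∈ Λ, dom X = D) → dom (⋂₀ Λ) ⊆ D)
    (prop_iii : ∀ X : Set Ω, MeasurableSet X → dom Xᶜ = dom X)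
    (X₀ Y₀ : Set Ω) (hX₀ : MeasurableSet X₀) (hY₀ : MeasurableSet Y₀)
    (hdisj : dom X₀ ∩ dom Y₀ = ∅) :
    dom (∅ : Set Ω) = ∅ ∧ dom (univ : Set Ω) = ∅ := by
  have hempty : dom (∅ : Set Ω) = ∅ := subset_empty_iff.mp <| hdisj ▸
    subset_inter (dom_empty_subset prop_ii prop_iii hX₀) (dom_empty_subset prop_ii prop_iii hY₀)
  refine ⟨hempty, ?_⟩
  rw [← compl_empty, prop_iii ∅ MeasurableSet.empty, hempty]
end

section
/- Let 𝒜 and ℬ be disjoint regions of 𝕊, let A be a full specification of 𝒜 and B a full specification of ℬ, and suppose A ∩ B ≠ ∅. Then A ∩ B is a full specification of 𝒜 ⊔ ℬ. -/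
/-!
By (i), the domain of `A ∩ B` is `dom A ∪ dom B ⊆ 𝒜 ∪ ℬ`. An event `X` with domain in
`𝒜 ∪ ℬ` has domain `(dom X ∩ 𝒜) ⊔ (dom X ∩ ℬ)`, so by (iv) it lies in the σ-algebra
generated by the events decidable in `𝒜` or in `ℬ`. Each of these is decided by `A` or by
`B`, hence by `A ∩ B`, and the sets decided by a fixed set form a σ-algebra.
-/

open Set MeasureTheory

/-- A least-domain-of-decidability function `dom : Σ → 𝒫(𝕊)`, with its four
defining properties (i)–(iv).  Events are the measurable subsets of `Ω`. -/
structure DomSystem (Ω S : Type*) [MeasurableSpace Ω] where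
  dom : Set Ω → Set S
  /-- (i): for a countable family of events whose domains are pairwise disjoint,
  the domain of the intersection is the (disjoint) union of the domains. -/
  prop_i : ∀ Λ : Set (Set Ω), Λ.Countable → (∀ X ∈ Λ, MeasurableSet X) →
    (∀ X ∈ Λ, ∀ Y ∈ Λ, X ≠ Y → Disjoint (dom X) (dom Y)) →
    dom (⋂₀ Λ) = ⋃ X ∈ Λ, dom X
  /-- (ii): for a countable family of events all having the same domain `D`,
  the domain of the intersection is contained in `D`. -/
  prop_ii : ∀ (Λ : Set (Set Ω)) (D : Set S), Λ.Countable →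
    (∀ X ∈ Λ, MeasurableSet X) → (∀ X ∈ Λ, dom X = D) → dom (⋂₀ Λ) ⊆ D
  /-- (iii): complementation preserves the domain. -/
  prop_iii : ∀ X : Set Ω, MeasurableSet X → dom Xᶜ = dom X
  /-- (iv): an event whose domain is a disjoint union `𝒳 ⊔ 𝒴` lies in the σ-algebra
  generated by `Γ(𝒳) ∪ Γ(𝒴)`, where `Γ(𝒳) = {X ∈ Σ : dom X ⊆ 𝒳}`. -/
  prop_iv : ∀ Z : Set Ω, MeasurableSet Z → ∀ 𝒳 𝒴 : Set S, Disjoint 𝒳 𝒴 →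
    dom Z = 𝒳 ∪ 𝒴 →
    MeasurableSet[MeasurableSpace.generateFrom
      ({X : Set Ω | MeasurableSet X ∧ dom X ⊆ 𝒳} ∪
        {X : Set Ω | MeasurableSet X ∧ dom X ⊆ 𝒴})] Z

/-- A full specification of a region `R ⊆ 𝕊`: a nonempty event `F` with `dom F ⊆ R`
that decides every event decidable within `R`. -/
def IsFullSpec {Ω S : Type*} [MeasurableSpace Ω] (dom : Set Ω → Set S)
    (R : Set S) (F : Set Ω) : Prop :=
  MeasurableSet F ∧ F.Nonempty ∧ dom F ⊆ R ∧
    ∀ X : Set Ω, MeasurableSet X → dom X ⊆ R → F ⊆ X ∨ F ⊆ Xᶜ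

abbrev decidedBy {Ω : Type*} (F : Set Ω) : MeasurableSpace Ω where
  MeasurableSet' Z := F ⊆ Z ∨ F ⊆ Zᶜ
  measurableSet_empty := Or.inr (compl_empty ▸ subset_univ F)
  measurableSet_compl Z := by
    rw [compl_compl]
    exact Or.symm
  measurableSet_iUnion f hf := by
    by_cases h : ∃ n, F ⊆ f n
    · obtain ⟨n, hn⟩ := h
      exact Or.inl (hn.trans (subset_iUnion f n))
    · push Not at h
      exact Or.inr (compl_iUnion f ▸ subset_iInter fun n => (hf n).resolve_left (h n))

theorem decidedBy_anti {Ω : Type*} {F G : Set Ω} (hGF : G ⊆ F) : decidedBy F ≤ decidedBy G :=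
  fun _ hZ => Or.imp hGF.trans hGF.trans hZ

theorem IsFullSpec.measurableSet_decidedBy {Ω S : Type*} [MeasurableSpace Ω]
    {dom : Set Ω → Set S} {R : Set S} {F X : Set Ω} (hF : IsFullSpec dom R F)
    (hX : MeasurableSet X) (hXR : dom X ⊆ R) : MeasurableSet[decidedBy F] X :=
  hF.2.2.2 X hX hXR

theorem DomSystem.dom_inter_of_disjoint {Ω S : Type*} [MeasurableSpace Ω] (D : DomSystem Ω S)
    {A B : Set Ω} (hA : MeasurableSet A) (hB : MeasurableSet B)
    (hAB : Disjoint (D.dom A) (D.dom B)) : D.dom (A ∩ B) = D.dom A ∪ D.dom B := by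
  by_cases hEq : A = B
  · subst hEq
    rw [inter_self, union_self]
  · have hpair := D.prop_i {A, B} ((finite_singleton B).insert A).countable
      (by rintro X (rfl | rfl) <;> assumption)
      (by
        rintro X (rfl | rfl) Y (rfl | rfl) hXY
        exacts [absurd rfl hXY, hAB, hAB.symm, absurd rfl hXY])
    simpa only [sInter_insert, sInter_singleton, mem_insert_iff, mem_singleton_iff,
      iUnion_iUnion_eq_or_left, iUnion_iUnion_eq_left] using hpair

/-- Lemma 1: if `𝒜` and `ℬ` are disjoint regions, `A`, `B` are full specifications of
them respectively, and `A ∩ B` is nonempty, then `A ∩ B` is a full specification of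
`𝒜 ⊔ ℬ`. -/
theorem stmt4 {Ω S : Type*} [MeasurableSpace Ω] (D : DomSystem Ω S)
    (𝒜 ℬ : Set S) (hAB : Disjoint 𝒜 ℬ) (A B : Set Ω)
    (hA : IsFullSpec D.dom 𝒜 A) (hB : IsFullSpec D.dom ℬ B)
    (hne : (A ∩ B).Nonempty) :
    IsFullSpec D.dom (𝒜 ∪ ℬ) (A ∩ B) := by
  refine ⟨hA.1.inter hB.1, hne, ?_, fun X hX hXR => ?_⟩
  · rw [D.dom_inter_of_disjoint hA.1 hB.1 (hAB.mono hA.2.2.1 hB.2.2.1)]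
    exact union_subset_union hA.2.2.1 hB.2.2.1
  have hsplit : D.dom X = D.dom X ∩ 𝒜 ∪ D.dom X ∩ ℬ := by
    rw [← inter_union_distrib_left, inter_eq_left.mpr hXR]
  have hgen := D.prop_iv X hX _ _ (hAB.mono inter_subset_right inter_subset_right) hsplit
  refine MeasurableSpace.generateFrom_le (m := decidedBy (A ∩ B)) ?_ X hgen
  rintro Z (⟨hZ, hZ𝒜⟩ | ⟨hZ, hZℬ⟩)
  · exact decidedBy_anti inter_subset_left Z
      (hA.measurableSet_decidedBy hZ (hZ𝒜.trans inter_subset_right))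
  · exact decidedBy_anti inter_subset_right Z
      (hB.measurableSet_decidedBy hZ (hZℬ.trans inter_subset_right))
end

section
/- Let A be a full specification of a region 𝒜 and let ℬ ⊆ 𝒜 be a region. Let B = Γ_ℬ(A) be the restriction of A to ℬ. Then for every event X with dom(X) ⊆ ℬ, either B ⊆ X or B ⊆ Xᶜ. -/
open Set MeasureTheory

/-- The restriction `Γ_R(A)` of an event `A` to a region `R`: the intersection of all
events `Z` with `A ⊆ Z` and `dom Z ⊆ R`. -/
def restr {Ω S : Type*} [MeasurableSpace Ω] (dom : Set Ω → Set S)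
    (R : Set S) (A : Set Ω) : Set Ω :=
  ⋂₀ {Z : Set Ω | MeasurableSet Z ∧ A ⊆ Z ∧ dom Z ⊆ R}

section Restriction

variable {Ω S : Type*} [MeasurableSpace Ω] {dom : Set Ω → Set S}

theorem restr_subset_of_subset {R : Set S} {A Z : Set Ω} (hZ : MeasurableSet Z)
    (hAZ : A ⊆ Z) (hdZ : dom Z ⊆ R) : restr dom R A ⊆ Z :=
  sInter_subset_of_mem ⟨hZ, hAZ, hdZ⟩

theorem IsFullSpec.subset_or_subset_compl {R ℬ : Set S} {F X : Set Ω}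
    (hF : IsFullSpec dom R F) (hBR : ℬ ⊆ R) (hX : MeasurableSet X) (hdX : dom X ⊆ ℬ) :
    F ⊆ X ∨ F ⊆ Xᶜ :=
  hF.2.2.2 X hX (hdX.trans hBR)

end Restriction

/-- Lemma 2: if `A` is a full specification of `𝒜` and `ℬ ⊆ 𝒜`, then the restriction
`B = Γ_ℬ(A)` decides every event decidable within `ℬ`: for every event `X` with
`dom X ⊆ ℬ`, either `B ⊆ X` or `B ⊆ Xᶜ`. -/
theorem stmt5 {Ω S : Type*} [MeasurableSpace Ω] (dom : Set Ω → Set S)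
    (prop_iii : ∀ X : Set Ω, MeasurableSet X → dom Xᶜ = dom X)
    (𝒜 ℬ : Set S) (hBA : ℬ ⊆ 𝒜) (A : Set Ω) (hA : IsFullSpec dom 𝒜 A) :
    ∀ X : Set Ω, MeasurableSet X → dom X ⊆ ℬ →
      restr dom ℬ A ⊆ X ∨ restr dom ℬ A ⊆ Xᶜ := by
  intro X hX hdX
  rcases hA.subset_or_subset_compl hBA hX hdX with hAX | hAXc
  · exact Or.inl (restr_subset_of_subset hX hAX hdX)
  · have hdXc : dom Xᶜ ⊆ ℬ := (prop_iii X hX).symm ▸ hdX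
    exact Or.inr (restr_subset_of_subset hX.compl hAXc hdXc)
end

section
/- For any region ℛ ⊆ 𝕊, the set Φ(ℛ) of all full specifications of ℛ is a partition of Ω: distinct full specifications of ℛ are disjoint, and every point of Ω belongs to some full specification of ℛ. -/
open Set MeasureTheory

section FullSpec

variable {Ω S : Type*} [MeasurableSpace Ω] {dom : Set Ω → Set S} {R : Set S}

theorem subset_restr (A : Set Ω) : A ⊆ restr dom R A :=
  subset_sInter fun _ hZ => hZ.2.1

theorem restr_subset {A Z : Set Ω} (hZ : MeasurableSet Z) (hAZ : A ⊆ Z) (hZR : dom Z ⊆ R) :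
    restr dom R A ⊆ Z :=
  sInter_subset_of_mem ⟨hZ, hAZ, hZR⟩

theorem IsFullSpec.subset_of_mem {F X : Set Ω} (hF : IsFullSpec dom R F)
    (hX : MeasurableSet X) (hXR : dom X ⊆ R) {ω : Ω} (hωF : ω ∈ F) (hωX : ω ∈ X) :
    F ⊆ X :=
  (hF.2.2.2 X hX hXR).resolve_right fun hFXc => hFXc hωF hωX

theorem IsFullSpec.eq_of_mem {F G : Set Ω} (hF : IsFullSpec dom R F)
    (hG : IsFullSpec dom R G) {ω : Ω} (hωF : ω ∈ F) (hωG : ω ∈ G) : F = G :=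
  (hF.subset_of_mem hG.1 hG.2.2.1 hωF hωG).antisymm
    (hG.subset_of_mem hF.1 hF.2.2.1 hωG hωF)

theorem IsFullSpec.disjoint_of_ne {F G : Set Ω} (hF : IsFullSpec dom R F)
    (hG : IsFullSpec dom R G) (hFG : F ≠ G) : Disjoint F G :=
  Set.disjoint_left.mpr fun _ hωF hωG => hFG (hF.eq_of_mem hG hωF hωG)

/-- An event `X` decidable in `R` with `ω ∉ X` is still decided: by property (iii) its
complement is decidable in `R` too, so it contains the restriction of `{ω}`. -/
theorem isFullSpec_restr_singleton
    (prop_iii : ∀ X : Set Ω, MeasurableSet X → dom Xᶜ = dom X) (ω : Ω)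
    (hmeas : MeasurableSet (restr dom R {ω})) (hdom : dom (restr dom R {ω}) ⊆ R) :
    IsFullSpec dom R (restr dom R {ω}) := by
  refine ⟨hmeas, ⟨ω, subset_restr {ω} rfl⟩, hdom, fun X hX hXR => ?_⟩
  by_cases hωX : ω ∈ X
  · exact .inl (restr_subset hX (singleton_subset_iff.mpr hωX) hXR)
  · exact .inr (restr_subset hX.compl (singleton_subset_iff.mpr hωX)
      ((prop_iii X hX).trans_le hXR))

end FullSpec

/-- Lemma 3: for any region `R`, the set `Φ(R)` of full specifications of `R` is a
partition of `Ω`: distinct full specifications are disjoint, and every point of `Ω`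
belongs to some full specification of `R`.  It is assumed that `dom` satisfies
property (iii), that singletons are events, and that restrictions of events are
events decidable in the restricting region. -/
theorem stmt7 {Ω S : Type*} [MeasurableSpace Ω] (dom : Set Ω → Set S)
    (prop_iii : ∀ X : Set Ω, MeasurableSet X → dom Xᶜ = dom X)
    (hsing : ∀ ω : Ω, MeasurableSet ({ω} : Set Ω))
    (hres : ∀ A : Set Ω, MeasurableSet A → ∀ R : Set S,
      MeasurableSet (restr dom R A) ∧ dom (restr dom R A) ⊆ R)
    (R : Set S) :
    (∀ F G : Set Ω, IsFullSpec dom R F → IsFullSpec dom R G → F ≠ G → F ∩ G = ∅) ∧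
      (∀ ω : Ω, ∃ F : Set Ω, IsFullSpec dom R F ∧ ω ∈ F) := by
  refine ⟨fun F G hF hG hFG => disjoint_iff_inter_eq_empty.mp (hF.disjoint_of_ne hG hFG),
    fun ω => ⟨restr dom R {ω}, ?_, subset_restr {ω} rfl⟩⟩
  obtain ⟨hmeas, hdom⟩ := hres {ω} (hsing ω) R
  exact isFullSpec_restr_singleton prop_iii ω hmeas hdom
end

section
/- (Claim 2: SO2 implies SO1.) Suppose the condition SO2 holds for the probability measure μ. Then the condition SO1 also holds: for all events A, B and all regions 𝒜 ⊇ dom(A), ℬ ⊇ dom(B) with 𝒜 ♮ ℬ, μ(A ∩ B | C) = μ(A | C) μ(B | C) for every full specification C of the mutual past 𝒫₁ = J⁻(𝒜) ∩ J⁻(ℬ) with μ(C) > 0. -/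
open Set MeasureTheory

/-- The causal past `J⁻(𝒳)` of a region in the causal structure `𝕊`. -/
def causalPast {S : Type*} [PartialOrder S] (𝒳 : Set S) : Set S :=
  {s | ∃ x ∈ 𝒳, s ≤ x}

/-- Two regions are spacelike, `𝒳 ♮ 𝒴`, if `J⁻(𝒳) ∩ 𝒴 = ∅` and `J⁻(𝒴) ∩ 𝒳 = ∅`. -/
def Spacelike {S : Type*} [PartialOrder S] (𝒳 𝒴 : Set S) : Prop :=
  causalPast 𝒳 ∩ 𝒴 = ∅ ∧ causalPast 𝒴 ∩ 𝒳 = ∅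

/-- Screening off, SO1: for all events `A`, `B` occurring in spacelike regions `𝒜 ♮ ℬ`,
`μ(A ∩ B | C) = μ(A | C)·μ(B | C)` for every full specification `C` of the mutual past
`𝒫₁ = J⁻(𝒜) ∩ J⁻(ℬ)` with `μ C > 0`. -/
def SO1 {Ω S : Type*} [MeasurableSpace Ω] [PartialOrder S]
    (dom : Set Ω → Set S) (μ : MeasureTheory.Measure Ω) : Prop :=
  ∀ A B : Set Ω, MeasurableSet A → MeasurableSet B →
    ∀ 𝒜 ℬ : Set S, dom A ⊆ 𝒜 → dom B ⊆ ℬ → Spacelike 𝒜 ℬ →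
      ∀ C : Set Ω, IsFullSpec dom (causalPast 𝒜 ∩ causalPast ℬ) C → 0 < μ C →
        μ ((A ∩ B) ∩ C) / μ C = (μ (A ∩ C) / μ C) * (μ (B ∩ C) / μ C)

/-- Screening off, SO2: as SO1, but conditioning on full specifications of the joint
past `𝒫₂ = (J⁻(𝒜) ∪ J⁻(ℬ)) \ (𝒜 ∪ ℬ)`. -/
def SO2 {Ω S : Type*} [MeasurableSpace Ω] [PartialOrder S]
    (dom : Set Ω → Set S) (μ : MeasureTheory.Measure Ω) : Prop :=
  ∀ A B : Set Ω, MeasurableSet A → MeasurableSet B →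
    ∀ 𝒜 ℬ : Set S, dom A ⊆ 𝒜 → dom B ⊆ ℬ → Spacelike 𝒜 ℬ →
      ∀ C : Set Ω,
        IsFullSpec dom ((causalPast 𝒜 ∪ causalPast ℬ) \ (𝒜 ∪ ℬ)) C → 0 < μ C →
          μ ((A ∩ B) ∩ C) / μ C = (μ (A ∩ C) / μ C) * (μ (B ∩ C) / μ C)

/-- Claim 2: SO2 implies SO1.  No properties of the least-domain-of-decidability
function `dom` are needed for this implication. -/
theorem stmt9 {Ω S : Type*} [MeasurableSpace Ω] [PartialOrder S]
    (dom : Set Ω → Set S) (μ : Measure Ω) [IsProbabilityMeasure μ]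
    (h2 : SO2 dom μ) : SO1 dom μ := by
  intro A B hA hB 𝒜 ℬ hdA hdB hS C hC hμC
  set P1 : Set S := causalPast 𝒜 ∩ causalPast ℬ with hP1
  set 𝒜' : Set S := causalPast 𝒜 \ P1 with h𝒜'
  set ℬ' : Set S := causalPast ℬ \ P1 with hℬ'
  have hself : ∀ 𝒳 : Set S, 𝒳 ⊆ causalPast 𝒳 := fun 𝒳 x hx => ⟨x, hx, le_refl x⟩
  have hsubA : 𝒜 ⊆ 𝒜' := fun x hx =>
    ⟨hself 𝒜 hx, fun h => (Set.eq_empty_iff_forall_notMem.mp hS.2 x) ⟨h.2, hx⟩⟩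
  have hsubB : ℬ ⊆ ℬ' := fun x hx =>
    ⟨hself ℬ hx, fun h => (Set.eq_empty_iff_forall_notMem.mp hS.1 x) ⟨h.1, hx⟩⟩
  have hpastA : causalPast 𝒜' = causalPast 𝒜 := by
    apply Set.Subset.antisymm
    · rintro s ⟨x, ⟨⟨y, hy, hxy⟩, -⟩, hsx⟩
      exact ⟨y, hy, le_trans hsx hxy⟩
    · rintro s ⟨x, hx, hsx⟩
      exact ⟨x, hsubA hx, hsx⟩
  have hpastB : causalPast ℬ' = causalPast ℬ := by
    apply Set.Subset.antisymm
    · rintro s ⟨x, ⟨⟨y, hy, hxy⟩, -⟩, hsx⟩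
      exact ⟨y, hy, le_trans hsx hxy⟩
    · rintro s ⟨x, hx, hsx⟩
      exact ⟨x, hsubB hx, hsx⟩
  have hS' : Spacelike 𝒜' ℬ' := by
    constructor
    · rw [hpastA]
      apply Set.eq_empty_iff_forall_notMem.mpr
      rintro s ⟨h1, h2, h3⟩
      exact h3 ⟨h1, h2⟩
    · rw [hpastB]
      apply Set.eq_empty_iff_forall_notMem.mpr
      rintro s ⟨h1, h2, h3⟩
      exact h3 ⟨h2, h1⟩
  have hjoint : (causalPast 𝒜' ∪ causalPast ℬ') \ (𝒜' ∪ ℬ') = P1 := by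
    rw [hpastA, hpastB]
    ext s
    constructor
    · rintro ⟨h1 | h1, h2⟩
      · by_contra hnp
        exact h2 (Or.inl ⟨h1, hnp⟩)
      · by_contra hnp
        exact h2 (Or.inr ⟨h1, hnp⟩)
    · rintro ⟨h1, h2⟩
      refine ⟨Or.inl h1, ?_⟩
      rintro (⟨-, h3⟩ | ⟨-, h3⟩) <;> exact h3 ⟨h1, h2⟩
  have hdA' : dom A ⊆ 𝒜' := hdA.trans hsubA
  have hdB' : dom B ⊆ ℬ' := hdB.trans hsubB
  have hC' : IsFullSpec dom ((causalPast 𝒜' ∪ causalPast ℬ') \ (𝒜' ∪ ℬ')) C := by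
    rw [hjoint]; exact hC
  exact h2 A B hA hB 𝒜' ℬ' hdA' hdB' hS' C hC' hμC
end

section
/- (No Bernstein paradox under full spacelike independence.) Suppose the probability measure μ satisfies: for all events X, Y whose domains are spacelike (dom(X) ♮ dom(Y)), μ(X ∩ Y) = μ(X)·μ(Y). Let A₁, …, A_n be events whose domains are pairwise spacelike: dom(A_i) ♮ dom(A_j) for all i ≠ j. Then μ(⋂_{i=1}^n A_i) = ∏_{i=1}^n μ(A_i). -/
open Set MeasureTheory

lemma spacelike_disjoint {S : Type*} [PartialOrder S] {X Y : Set S}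
    (h : Spacelike X Y) : Disjoint X Y := by
  rw [Set.disjoint_iff_inter_eq_empty]
  have h1 := h.1
  rw [Set.eq_empty_iff_forall_notMem] at h1 ⊢
  intro s hs
  exact h1 s ⟨⟨s, hs.1, le_refl s⟩, hs.2⟩

lemma spacelike_biUnion {S ι : Type*} [PartialOrder S] {X : Set S}
    {t : Set ι} {Y : ι → Set S} (h : ∀ i ∈ t, Spacelike X (Y i)) :
    Spacelike X (⋃ i ∈ t, Y i) := by
  constructor
  · rw [Set.eq_empty_iff_forall_notMem]
    rintro s ⟨hs, hmem⟩
    simp only [Set.mem_iUnion] at hmem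
    obtain ⟨i, hi, hsi⟩ := hmem
    have := (h i hi).1
    rw [Set.eq_empty_iff_forall_notMem] at this
    exact this s ⟨hs, hsi⟩
  · rw [Set.eq_empty_iff_forall_notMem]
    rintro s ⟨⟨y, hy, hsy⟩, hsX⟩
    simp only [Set.mem_iUnion] at hy
    obtain ⟨i, hi, hyi⟩ := hy
    have := (h i hi).2
    rw [Set.eq_empty_iff_forall_notMem] at this
    exact this s ⟨⟨y, hyi, hsy⟩, hsX⟩

/-- No Bernstein paradox: if every pair of events with spacelike domains is
independent, then any finite family of events with pairwise spacelike domains has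
no mutual correlation: `μ(⋂ᵢ Aᵢ) = ∏ᵢ μ(Aᵢ)`.  Property (i) of the
least-domain-of-decidability function `dom` is assumed. -/
theorem stmt11 {Ω S : Type*} [MeasurableSpace Ω] [PartialOrder S]
    (dom : Set Ω → Set S)
    (prop_i : ∀ Λ : Set (Set Ω), Λ.Countable → (∀ X ∈ Λ, MeasurableSet X) →
      (∀ X ∈ Λ, ∀ Y ∈ Λ, X ≠ Y → Disjoint (dom X) (dom Y)) →
      dom (⋂₀ Λ) = ⋃ X ∈ Λ, dom X)
    (μ : Measure Ω) [IsProbabilityMeasure μ]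
    (hindep : ∀ X Y : Set Ω, MeasurableSet X → MeasurableSet Y →
      Spacelike (dom X) (dom Y) → μ (X ∩ Y) = μ X * μ Y)
    (n : ℕ) (A : Fin n → Set Ω) (hA : ∀ i, MeasurableSet (A i))
    (hsl : ∀ i j, i ≠ j → Spacelike (dom (A i)) (dom (A j))) :
    μ (⋂ i, A i) = ∏ i, μ (A i) := by
  have key : ∀ s : Finset (Fin n), μ (⋂ i ∈ s, A i) = ∏ i ∈ s, μ (A i) := by
    intro s
    induction s using Finset.induction with
    | empty => simp
    | @insert a s ha ih =>
      have hdom : dom (⋂ i ∈ s, A i) = ⋃ i ∈ s, dom (A i) := by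
        have hΛ := prop_i (A '' ↑s) ((s.finite_toSet.image A).countable)
          (by rintro X ⟨i, _, rfl⟩; exact hA i)
          (by
            rintro X ⟨i, hi, rfl⟩ Y ⟨j, hj, rfl⟩ hne
            have hij : i ≠ j := by rintro rfl; exact hne rfl
            exact spacelike_disjoint (hsl i j hij))
        rw [Set.sInter_image, Set.biUnion_image] at hΛ
        simpa using hΛ
      have hSL : Spacelike (dom (A a)) (dom (⋂ i ∈ s, A i)) := by
        rw [hdom]
        exact spacelike_biUnion (fun i hi => hsl a i (by rintro rfl; exact ha hi))
      have hmeas : MeasurableSet (⋂ i ∈ s, A i) :=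
        MeasurableSet.biInter s.countable_toSet (fun i _ => hA i)
      rw [Finset.set_biInter_insert, hindep _ _ (hA a) hmeas hSL, ih,
        Finset.prod_insert ha]
  simpa using key Finset.univ
end

section
/- (Lemma 7.) Let μ̂ be a complex-valued function on subsets of a set Ω̂, and let A, B, X, Y, P ⊆ Ω̂ with μ̂(P) ≠ 0. Suppose that μ̂(A ∩ Y ∩ P)·μ̂(B ∩ X ∩ P) = μ̂(A ∩ B ∩ X ∩ Y ∩ P)·μ̂(P), μ̂(A ∩ Y ∩ P)·μ̂(X ∩ P) = μ̂(A ∩ X ∩ Y ∩ P)·μ̂(P), μ̂(Y ∩ P)·μ̂(B ∩ X ∩ P) = μ̂(B ∩ X ∩ Y ∩ P)·μ̂(P), and μ̂(Y ∩ P)·μ̂(X ∩ P) = μ̂(X ∩ Y ∩ P)·μ̂(P). Then μ̂(A ∩ X ∩ Y ∩ P)·μ̂(B ∩ X ∩ Y ∩ P) = μ̂(A ∩ B ∩ X ∩ Y ∩ P)·μ̂(X ∩ Y ∩ P). -/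
theorem mul_eq_mul_of_mul_eq_cross_products {M : Type*} [CommMonoidWithZero M]
    [IsRightCancelMulZero M] {a b c d p u v x y : M} (hp : p ≠ 0)
    (ha : u * x = a * p) (hb : y * v = b * p) (hc : u * v = c * p) (hd : y * x = d * p) :
    a * b = c * d := by
  refine mul_right_cancel₀ (mul_ne_zero hp hp) ?_
  calc a * b * (p * p) = (u * x) * (y * v) := by rw [ha, hb]; ac_rfl
    _ = (u * v) * (y * x) := by ac_rfl
    _ = c * d * (p * p) := by rw [hc, hd]; ac_rfl

/-- Lemma 7: for a complex-valued set function `μ̂` on subsets of `Ω̂` with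
`μ̂ P ≠ 0`, the four product identities imply
`μ̂(A ∩ X ∩ Y ∩ P)·μ̂(B ∩ X ∩ Y ∩ P) = μ̂(A ∩ B ∩ X ∩ Y ∩ P)·μ̂(X ∩ Y ∩ P)`. -/
theorem stmt14 {Ωh : Type*} (μh : Set Ωh → ℂ) (A B X Y P : Set Ωh)
    (hP : μh P ≠ 0)
    (h1 : μh (A ∩ Y ∩ P) * μh (B ∩ X ∩ P) = μh (A ∩ B ∩ X ∩ Y ∩ P) * μh P)
    (h2 : μh (A ∩ Y ∩ P) * μh (X ∩ P) = μh (A ∩ X ∩ Y ∩ P) * μh P)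
    (h3 : μh (Y ∩ P) * μh (B ∩ X ∩ P) = μh (B ∩ X ∩ Y ∩ P) * μh P)
    (h4 : μh (Y ∩ P) * μh (X ∩ P) = μh (X ∩ Y ∩ P) * μh P) :
    μh (A ∩ X ∩ Y ∩ P) * μh (B ∩ X ∩ Y ∩ P) =
      μh (A ∩ B ∩ X ∩ Y ∩ P) * μh (X ∩ Y ∩ P) :=
  mul_eq_mul_of_mul_eq_cross_products hP h2 h3 h1 h4
end

section
/- (Claim 4: QSO2 implies QSO1.) Suppose the condition QSO2 holds for μ̂. Then the condition QSO1 also holds: for all pseudo-events A, B with pdom(A) ⊆ 𝒜 and pdom(B) ⊆ ℬ for regions 𝒜 ♮ ℬ, μ̂(A ∩ B ∩ C)·μ̂(C) = μ̂(A ∩ C)·μ̂(B ∩ C) for every C ∈ Φ_p(𝒫₁), where 𝒫₁ = J⁻(𝒜) ∩ J⁻(ℬ) is the mutual past. -/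
/-!
Given spacelike `𝒜 ♮ ℬ`, enlarge them to `𝒜' = J⁻(𝒜) \ J⁻(ℬ)` and `ℬ' = J⁻(ℬ) \ J⁻(𝒜)`.
These still contain `𝒜` and `ℬ`, have the same causal pasts, and are still spacelike, while
their joint past `(J⁻(𝒜) ∪ J⁻(ℬ)) \ (J⁻(𝒜) ∆ J⁻(ℬ))` is exactly the mutual past
`J⁻(𝒜) ∩ J⁻(ℬ)` of the original regions. So QSO2 applied to `𝒜', ℬ'` is QSO1 for `𝒜, ℬ`.
-/

open Set MeasureTheory

/-- A pseudo-event full specification of a region `R ⊆ 𝕊`: a subset of `Ω × Ω` that is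
the product `G × H` of two event full specifications `G`, `H` of `R`. -/
def IsPseudoFullSpec {Ω S : Type*} [MeasurableSpace Ω] (dom : Set Ω → Set S)
    (R : Set S) (F : Set (Ω × Ω)) : Prop :=
  ∃ G H : Set Ω, IsFullSpec dom R G ∧ IsFullSpec dom R H ∧ F = G ×ˢ H

/-- Quantum screening off, QSO1: for all pseudo-events `A = A₁ × A₂`, `B = B₁ × B₂`
with `pdom A ⊆ 𝒜`, `pdom B ⊆ ℬ` for spacelike regions `𝒜 ♮ ℬ`,
`μ̂(A ∩ B ∩ C)·μ̂(C) = μ̂(A ∩ C)·μ̂(B ∩ C)` for every pseudo-event full specification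
`C` of the mutual past `𝒫₁ = J⁻(𝒜) ∩ J⁻(ℬ)`. -/
def QSO1 {Ω S : Type*} [MeasurableSpace Ω] [PartialOrder S]
    (dom : Set Ω → Set S) (μh : Set (Ω × Ω) → ℂ) : Prop :=
  ∀ A₁ A₂ B₁ B₂ : Set Ω, MeasurableSet A₁ → MeasurableSet A₂ →
    MeasurableSet B₁ → MeasurableSet B₂ →
    ∀ 𝒜 ℬ : Set S, dom A₁ ∪ dom A₂ ⊆ 𝒜 → dom B₁ ∪ dom B₂ ⊆ ℬ → Spacelike 𝒜 ℬ →
      ∀ C : Set (Ω × Ω), IsPseudoFullSpec dom (causalPast 𝒜 ∩ causalPast ℬ) C →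
        μh ((A₁ ×ˢ A₂) ∩ (B₁ ×ˢ B₂) ∩ C) * μh C =
          μh ((A₁ ×ˢ A₂) ∩ C) * μh ((B₁ ×ˢ B₂) ∩ C)

/-- Quantum screening off, QSO2: as QSO1, but with pseudo-event full specifications of
the joint past `𝒫₂ = (J⁻(𝒜) ∪ J⁻(ℬ)) \ (𝒜 ∪ ℬ)`. -/
def QSO2 {Ω S : Type*} [MeasurableSpace Ω] [PartialOrder S]
    (dom : Set Ω → Set S) (μh : Set (Ω × Ω) → ℂ) : Prop :=
  ∀ A₁ A₂ B₁ B₂ : Set Ω, MeasurableSet A₁ → MeasurableSet A₂ →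
    MeasurableSet B₁ → MeasurableSet B₂ →
    ∀ 𝒜 ℬ : Set S, dom A₁ ∪ dom A₂ ⊆ 𝒜 → dom B₁ ∪ dom B₂ ⊆ ℬ → Spacelike 𝒜 ℬ →
      ∀ C : Set (Ω × Ω),
        IsPseudoFullSpec dom ((causalPast 𝒜 ∪ causalPast ℬ) \ (𝒜 ∪ ℬ)) C →
          μh ((A₁ ×ˢ A₂) ∩ (B₁ ×ˢ B₂) ∩ C) * μh C =
            μh ((A₁ ×ˢ A₂) ∩ C) * μh ((B₁ ×ˢ B₂) ∩ C)

section CausalPast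

variable {S : Type*} [PartialOrder S] {𝒳 𝒴 : Set S}

theorem subset_causalPast (𝒳 : Set S) : 𝒳 ⊆ causalPast 𝒳 :=
  fun x hx => ⟨x, hx, le_rfl⟩

theorem causalPast_eq_of_subset_of_subset (h₁ : 𝒳 ⊆ 𝒴) (h₂ : 𝒴 ⊆ causalPast 𝒳) :
    causalPast 𝒴 = causalPast 𝒳 := by
  apply Subset.antisymm
  · rintro s ⟨y, hy, hsy⟩
    obtain ⟨x, hx, hyx⟩ := h₂ hy
    exact ⟨x, hx, hsy.trans hyx⟩
  · rintro s ⟨x, hx, hsx⟩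
    exact ⟨x, h₁ hx, hsx⟩

theorem Spacelike.symm (h : Spacelike 𝒳 𝒴) : Spacelike 𝒴 𝒳 :=
  ⟨h.2, h.1⟩

theorem Spacelike.subset_causalPast_diff (h : Spacelike 𝒳 𝒴) :
    𝒳 ⊆ causalPast 𝒳 \ causalPast 𝒴 := fun _ hx =>
  ⟨subset_causalPast 𝒳 hx, fun hxY => h.2.subset ⟨hxY, hx⟩⟩

theorem Spacelike.causalPast_causalPast_diff (h : Spacelike 𝒳 𝒴) :
    causalPast (causalPast 𝒳 \ causalPast 𝒴) = causalPast 𝒳 :=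
  causalPast_eq_of_subset_of_subset h.subset_causalPast_diff sdiff_subset

theorem Spacelike.spacelike_causalPast_diff (h : Spacelike 𝒳 𝒴) :
    Spacelike (causalPast 𝒳 \ causalPast 𝒴) (causalPast 𝒴 \ causalPast 𝒳) := by
  constructor
  · rw [h.causalPast_causalPast_diff]
    exact inter_sdiff_self _ _
  · rw [h.symm.causalPast_causalPast_diff]
    exact inter_sdiff_self _ _

end CausalPast

/-- Claim 4: QSO2 implies QSO1.  No properties of the least-domain-of-decidability
function `dom` are needed for this implication. -/
theorem stmt16 {Ω S : Type*} [MeasurableSpace Ω] [PartialOrder S]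
    (dom : Set Ω → Set S) (μh : Set (Ω × Ω) → ℂ)
    (h2 : QSO2 dom μh) : QSO1 dom μh := by
  intro A₁ A₂ B₁ B₂ hA₁ hA₂ hB₁ hB₂ 𝒜 ℬ hA hB hs C hC
  have hJointPast : (causalPast (causalPast 𝒜 \ causalPast ℬ) ∪
      causalPast (causalPast ℬ \ causalPast 𝒜)) \
      ((causalPast 𝒜 \ causalPast ℬ) ∪ (causalPast ℬ \ causalPast 𝒜)) =
      causalPast 𝒜 ∩ causalPast ℬ := by
    rw [hs.causalPast_causalPast_diff, hs.symm.causalPast_causalPast_diff]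
    exact sup_sdiff_symmDiff (causalPast 𝒜) (causalPast ℬ)
  exact h2 A₁ A₂ B₁ B₂ hA₁ hA₂ hB₁ hB₂ _ _
    (hA.trans hs.subset_causalPast_diff) (hB.trans hs.symm.subset_causalPast_diff)
    hs.spacelike_causalPast_diff C (hJointPast ▸ hC)
end

section
/- (Corollary: QSO1 is equivalent to QSO2.) Suppose μ̂(C) ≠ 0 for every pseudo-event full specification C of any region. Then μ̂ satisfies the condition QSO1 if and only if it satisfies the condition QSO2. -/
open Set MeasureTheory

namespace Stmt17Aux

variable {Ω S : Type*} [MeasurableSpace Ω]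

lemma mem_restr_self (dom : Set Ω → Set S) (R : Set S) (ω : Ω) :
    ω ∈ restr dom R {ω} := by
  intro Z hZ
  exact hZ.2.1 rfl

lemma restr_subset (dom : Set Ω → Set S) (R : Set S) (ω : Ω) {Z : Set Ω}
    (hZm : MeasurableSet Z) (hω : ω ∈ Z) (hd : dom Z ⊆ R) :
    restr dom R {ω} ⊆ Z :=
  Set.sInter_subset_of_mem ⟨hZm, Set.singleton_subset_iff.2 hω, hd⟩

lemma restr_anti (dom : Set Ω → Set S) {R₁ R₂ : Set S} (h : R₁ ⊆ R₂) (A : Set Ω) :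
    restr dom R₂ A ⊆ restr dom R₁ A := by
  apply Set.sInter_subset_sInter
  intro Z hZ
  exact ⟨hZ.1, hZ.2.1, hZ.2.2.trans h⟩

lemma isFullSpec_restr (D : DomSystem Ω S)
    (hsing : ∀ ω : Ω, MeasurableSet ({ω} : Set Ω))
    (hres : ∀ A : Set Ω, MeasurableSet A → ∀ R : Set S,
      MeasurableSet (restr D.dom R A) ∧ D.dom (restr D.dom R A) ⊆ R)
    (R : Set S) (ω : Ω) :
    IsFullSpec D.dom R (restr D.dom R {ω}) := by
  obtain ⟨hm, hd⟩ := hres {ω} (hsing ω) R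
  refine ⟨hm, ⟨ω, mem_restr_self _ _ _⟩, hd, ?_⟩
  intro X hXm hXd
  by_cases hω : ω ∈ X
  · exact Or.inl (restr_subset _ _ _ hXm hω hXd)
  · exact Or.inr (restr_subset _ _ _ hXm.compl hω (by rw [D.prop_iii X hXm]; exact hXd))

lemma fullSpec_eq_restr (D : DomSystem Ω S) {R : Set S} {F : Set Ω} {ω : Ω}
    (hF : IsFullSpec D.dom R F) (hω : ω ∈ F) :
    F = restr D.dom R {ω} := by
  apply Set.Subset.antisymm
  · intro x hx Z hZ
    rcases hF.2.2.2 Z hZ.1 hZ.2.2 with h | h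
    · exact h hx
    · exact absurd (hZ.2.1 rfl) (h hω)
  · exact Set.sInter_subset_of_mem ⟨hF.1, Set.singleton_subset_iff.2 hω, hF.2.2.1⟩

/-- The σ-algebra of sets decided by a fixed set `F`. -/
def decides (F : Set Ω) : MeasurableSpace Ω where
  MeasurableSet' W := F ⊆ W ∨ F ⊆ Wᶜ
  measurableSet_empty := Or.inr (by simp)
  measurableSet_compl W h := by
    rcases h with h | h
    · exact Or.inr (by simpa using h)
    · exact Or.inl h
  measurableSet_iUnion g hg := by
    by_cases h : ∃ i, F ⊆ g i
    · exact Or.inl (h.choose_spec.trans (Set.subset_iUnion g h.choose))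
    · push_neg at h
      refine Or.inr fun x hx hxU => ?_
      rcases Set.mem_iUnion.1 hxU with ⟨i, hi⟩
      rcases hg i with h' | h'
      · exact h i h'
      · exact h' hx hi

lemma restr_union (D : DomSystem Ω S)
    (hsing : ∀ ω : Ω, MeasurableSet ({ω} : Set Ω))
    (hres : ∀ A : Set Ω, MeasurableSet A → ∀ R : Set S,
      MeasurableSet (restr D.dom R A) ∧ D.dom (restr D.dom R A) ⊆ R)
    {R₁ R₂ : Set S} (_hd : Disjoint R₁ R₂) (ω : Ω) :
    restr D.dom (R₁ ∪ R₂) {ω} = restr D.dom R₁ {ω} ∩ restr D.dom R₂ {ω} := by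
  set F₁ := restr D.dom R₁ {ω} with hF₁
  set F₂ := restr D.dom R₂ {ω} with hF₂
  apply Set.Subset.antisymm
  · exact Set.subset_inter (restr_anti _ Set.subset_union_left _)
      (restr_anti _ Set.subset_union_right _)
  · apply Set.subset_sInter
    intro Z hZ
    obtain ⟨hZm, hωZ, hZd⟩ := hZ
    have hgen := D.prop_iv Z hZm (D.dom Z ∩ R₁) (D.dom Z \ R₁)
      (Set.disjoint_left.2 fun s hs hs' => hs'.2 hs.2)
      (by rw [Set.inter_union_diff])
    have hle : MeasurableSpace.generateFrom
        ({X : Set Ω | MeasurableSet X ∧ D.dom X ⊆ D.dom Z ∩ R₁} ∪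
          {X : Set Ω | MeasurableSet X ∧ D.dom X ⊆ D.dom Z \ R₁}) ≤ decides (F₁ ∩ F₂) := by
      apply MeasurableSpace.generateFrom_le
      intro W hW
      rcases hW with hW | hW
      · rcases (isFullSpec_restr D hsing hres R₁ ω).2.2.2 W hW.1
          (hW.2.trans Set.inter_subset_right) with h | h
        · exact Or.inl (Set.inter_subset_left.trans h)
        · exact Or.inr (Set.inter_subset_left.trans h)
      · have hWd : D.dom W ⊆ R₂ := hW.2.trans fun s hs => by
          rcases hZd hs.1 with h | h
          · exact absurd h hs.2
          · exact h
        rcases (isFullSpec_restr D hsing hres R₂ ω).2.2.2 W hW.1 hWd with h | h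
        · exact Or.inl (Set.inter_subset_right.trans h)
        · exact Or.inr (Set.inter_subset_right.trans h)
    rcases hle _ hgen with h | h
    · exact h
    · exact absurd (hωZ rfl)
        (h ⟨mem_restr_self _ _ _, mem_restr_self _ _ _⟩)

lemma dom_inter_subset (D : DomSystem Ω S) {X Y : Set Ω} {U V : Set S}
    (hXm : MeasurableSet X) (hYm : MeasurableSet Y)
    (hXd : D.dom X ⊆ U) (hYd : D.dom Y ⊆ V) (hUV : Disjoint U V) :
    D.dom (X ∩ Y) ⊆ U ∪ V := by
  by_cases hXY : X = Y
  · subst hXY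
    rw [Set.inter_self]
    exact hXd.trans Set.subset_union_left
  · have := D.prop_i {X, Y} ((Set.countable_singleton Y).insert X)
      (by rintro W (rfl | rfl) <;> assumption)
      (by
        rintro W (rfl | rfl) W' (rfl | rfl) hne
        · exact absurd rfl hne
        · exact hUV.mono hXd hYd
        · exact (hUV.symm).mono hYd hXd
        · exact absurd rfl hne)
    rw [Set.sInter_pair] at this
    rw [this]
    simp only [Set.mem_insert_iff, Set.mem_singleton_iff, Set.iUnion_iUnion_eq_or_left,
      Set.iUnion_iUnion_eq_left]
    exact Set.union_subset (hXd.trans Set.subset_union_left) (hYd.trans Set.subset_union_right)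

section Causal
variable {S' : Type*} [PartialOrder S']

lemma subset_causalPast (𝒳 : Set S') : 𝒳 ⊆ causalPast 𝒳 :=
  fun x hx => ⟨x, hx, le_refl x⟩

lemma causalPast_union (𝒳 𝒴 : Set S') :
    causalPast (𝒳 ∪ 𝒴) = causalPast 𝒳 ∪ causalPast 𝒴 := by
  ext s
  constructor
  · rintro ⟨x, hx | hx, hle⟩
    · exact Or.inl ⟨x, hx, hle⟩
    · exact Or.inr ⟨x, hx, hle⟩
  · rintro (⟨x, hx, hle⟩ | ⟨x, hx, hle⟩)
    · exact ⟨x, Or.inl hx, hle⟩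
    · exact ⟨x, Or.inr hx, hle⟩

lemma causalPast_of_subset_causalPast {𝒳 𝒴 : Set S'} (h : 𝒴 ⊆ causalPast 𝒳) :
    causalPast 𝒴 ⊆ causalPast 𝒳 := by
  rintro s ⟨y, hy, hle⟩
  rcases h hy with ⟨x, hx, hle'⟩
  exact ⟨x, hx, hle.trans hle'⟩

end Causal

end Stmt17Aux
namespace Stmt17Aux

section Causal2
variable {S' : Type*} [PartialOrder S'] {𝒜 ℬ : Set S'}

lemma causalPast_prime (𝒜 ℬ : Set S') :
    causalPast (𝒜 ∪ (causalPast 𝒜 \ (𝒜 ∪ causalPast ℬ))) = causalPast 𝒜 := by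
  rw [causalPast_union]
  exact Set.union_eq_left.2
    (causalPast_of_subset_causalPast Set.diff_subset)

lemma spacelike_prime (h : Spacelike 𝒜 ℬ) :
    Spacelike (𝒜 ∪ (causalPast 𝒜 \ (𝒜 ∪ causalPast ℬ)))
      (ℬ ∪ (causalPast ℬ \ (ℬ ∪ causalPast 𝒜))) := by
  obtain ⟨h1, h2⟩ := h
  constructor
  · rw [causalPast_prime]
    apply Set.eq_empty_iff_forall_notMem.2
    rintro s ⟨hsA, (hsB | ⟨_, hnB⟩)⟩
    · exact Set.eq_empty_iff_forall_notMem.1 h1 s ⟨hsA, hsB⟩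
    · exact hnB (Or.inr hsA)
  · rw [causalPast_prime]
    apply Set.eq_empty_iff_forall_notMem.2
    rintro s ⟨hsB, (hsA | ⟨_, hnA⟩)⟩
    · exact Set.eq_empty_iff_forall_notMem.1 h2 s ⟨hsB, hsA⟩
    · exact hnA (Or.inr hsB)

lemma jointPast_prime (h : Spacelike 𝒜 ℬ) :
    (causalPast (𝒜 ∪ (causalPast 𝒜 \ (𝒜 ∪ causalPast ℬ))) ∪
        causalPast (ℬ ∪ (causalPast ℬ \ (ℬ ∪ causalPast 𝒜)))) \
      ((𝒜 ∪ (causalPast 𝒜 \ (𝒜 ∪ causalPast ℬ))) ∪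
        (ℬ ∪ (causalPast ℬ \ (ℬ ∪ causalPast 𝒜)))) =
      causalPast 𝒜 ∩ causalPast ℬ := by
  obtain ⟨h1, h2⟩ := h
  rw [causalPast_prime, causalPast_prime]
  ext s
  have k1 : s ∈ causalPast 𝒜 → s ∉ ℬ :=
    fun hs hb => Set.eq_empty_iff_forall_notMem.1 h1 s ⟨hs, hb⟩
  have k2 : s ∈ causalPast ℬ → s ∉ 𝒜 :=
    fun hs hb => Set.eq_empty_iff_forall_notMem.1 h2 s ⟨hs, hb⟩
  have kA : s ∈ 𝒜 → s ∈ causalPast 𝒜 := fun hs => subset_causalPast _ hs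
  have kB : s ∈ ℬ → s ∈ causalPast ℬ := fun hs => subset_causalPast _ hs
  simp only [Set.mem_diff, Set.mem_union, Set.mem_inter_iff]
  tauto

lemma P2_decomp (h : Spacelike 𝒜 ℬ) :
    (causalPast 𝒜 ∪ causalPast ℬ) \ (𝒜 ∪ ℬ) =
      (causalPast 𝒜 ∩ causalPast ℬ) ∪
        ((causalPast 𝒜 \ (𝒜 ∪ causalPast ℬ)) ∪ (causalPast ℬ \ (ℬ ∪ causalPast 𝒜))) := by
  obtain ⟨h1, h2⟩ := h
  ext s
  have k1 : s ∈ causalPast 𝒜 → s ∉ ℬ :=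
    fun hs hb => Set.eq_empty_iff_forall_notMem.1 h1 s ⟨hs, hb⟩
  have k2 : s ∈ causalPast ℬ → s ∉ 𝒜 :=
    fun hs hb => Set.eq_empty_iff_forall_notMem.1 h2 s ⟨hs, hb⟩
  have kA : s ∈ 𝒜 → s ∈ causalPast 𝒜 := fun hs => subset_causalPast _ hs
  have kB : s ∈ ℬ → s ∈ causalPast ℬ := fun hs => subset_causalPast _ hs
  simp only [Set.mem_diff, Set.mem_union, Set.mem_inter_iff]
  tauto

lemma disj_P1_L :
    Disjoint (causalPast 𝒜 ∩ causalPast ℬ)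
      ((causalPast 𝒜 \ (𝒜 ∪ causalPast ℬ)) ∪ (causalPast ℬ \ (ℬ ∪ causalPast 𝒜))) := by
  rw [Set.disjoint_left]
  rintro s ⟨hsA, hsB⟩ (⟨_, hn⟩ | ⟨_, hn⟩)
  · exact hn (Or.inr hsB)
  · exact hn (Or.inr hsA)

lemma disj_LA_LB :
    Disjoint (causalPast 𝒜 \ (𝒜 ∪ causalPast ℬ)) (causalPast ℬ \ (ℬ ∪ causalPast 𝒜)) := by
  rw [Set.disjoint_left]
  rintro s ⟨hsA, _⟩ ⟨_, hn⟩
  exact hn (Or.inr hsA)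

lemma disj_A_LA : Disjoint 𝒜 (causalPast 𝒜 \ (𝒜 ∪ causalPast ℬ)) := by
  rw [Set.disjoint_left]
  rintro s hs ⟨_, hn⟩
  exact hn (Or.inl hs)

end Causal2

end Stmt17Aux
/-- Corollary 4: QSO1 is equivalent to QSO2, assuming `μ̂ C ≠ 0` for every
pseudo-event full specification `C` of any region, that singletons are events, and
that restrictions of events are events decidable in the restricting region. -/
theorem stmt17 {Ω S : Type*} [MeasurableSpace Ω] [PartialOrder S]
    (D : DomSystem Ω S)
    (hsing : ∀ ω : Ω, MeasurableSet ({ω} : Set Ω))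
    (hres : ∀ A : Set Ω, MeasurableSet A → ∀ R : Set S,
      MeasurableSet (restr D.dom R A) ∧ D.dom (restr D.dom R A) ⊆ R)
    (μh : Set (Ω × Ω) → ℂ)
    (hnz : ∀ (R : Set S) (C : Set (Ω × Ω)), IsPseudoFullSpec D.dom R C → μh C ≠ 0) :
    QSO1 D.dom μh ↔ QSO2 D.dom μh := by
  constructor
  · -- QSO1 → QSO2
    intro hQ A₁ A₂ B₁ B₂ hA₁ hA₂ hB₁ hB₂ 𝒜 ℬ hA hB hsp C hC
    obtain ⟨G, H, hG, hH, rfl⟩ := hC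
    obtain ⟨ωG, hωG⟩ := hG.2.1
    obtain ⟨ωH, hωH⟩ := hH.2.1
    have hGeq := Stmt17Aux.fullSpec_eq_restr D hG hωG
    have hHeq := Stmt17Aux.fullSpec_eq_restr D hH hωH
    rw [Stmt17Aux.P2_decomp hsp] at hGeq hHeq
    rw [Stmt17Aux.restr_union D hsing hres Stmt17Aux.disj_P1_L ωG,
        Stmt17Aux.restr_union D hsing hres Stmt17Aux.disj_LA_LB ωG] at hGeq
    rw [Stmt17Aux.restr_union D hsing hres Stmt17Aux.disj_P1_L ωH,
        Stmt17Aux.restr_union D hsing hres Stmt17Aux.disj_LA_LB ωH] at hHeq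
    rw [hGeq, hHeq]
    have fsg1 := Stmt17Aux.isFullSpec_restr D hsing hres (causalPast 𝒜 ∩ causalPast ℬ) ωG
    have fsgA := Stmt17Aux.isFullSpec_restr D hsing hres
      (causalPast 𝒜 \ (𝒜 ∪ causalPast ℬ)) ωG
    have fsgB := Stmt17Aux.isFullSpec_restr D hsing hres
      (causalPast ℬ \ (ℬ ∪ causalPast 𝒜)) ωG
    have fsk1 := Stmt17Aux.isFullSpec_restr D hsing hres (causalPast 𝒜 ∩ causalPast ℬ) ωH
    have fskA := Stmt17Aux.isFullSpec_restr D hsing hres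
      (causalPast 𝒜 \ (𝒜 ∪ causalPast ℬ)) ωH
    have fskB := Stmt17Aux.isFullSpec_restr D hsing hres
      (causalPast ℬ \ (ℬ ∪ causalPast 𝒜)) ωH
    set g1 := restr D.dom (causalPast 𝒜 ∩ causalPast ℬ) {ωG} with hg1
    set gA := restr D.dom (causalPast 𝒜 \ (𝒜 ∪ causalPast ℬ)) {ωG} with hgA
    set gB := restr D.dom (causalPast ℬ \ (ℬ ∪ causalPast 𝒜)) {ωG} with hgB
    set k1 := restr D.dom (causalPast 𝒜 ∩ causalPast ℬ) {ωH} with hk1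
    set kA := restr D.dom (causalPast 𝒜 \ (𝒜 ∪ causalPast ℬ)) {ωH} with hkA
    set kB := restr D.dom (causalPast ℬ \ (ℬ ∪ causalPast 𝒜)) {ωH} with hkB
    have hsp' := Stmt17Aux.spacelike_prime hsp
    have hC' : IsPseudoFullSpec D.dom
        (causalPast (𝒜 ∪ (causalPast 𝒜 \ (𝒜 ∪ causalPast ℬ))) ∩
          causalPast (ℬ ∪ (causalPast ℬ \ (ℬ ∪ causalPast 𝒜)))) (g1 ×ˢ k1) := by
      rw [Stmt17Aux.causalPast_prime, Stmt17Aux.causalPast_prime]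
      exact ⟨g1, k1, fsg1, fsk1, rfl⟩
    have hA₁d : D.dom A₁ ⊆ 𝒜 := Set.subset_union_left.trans hA
    have hA₂d : D.dom A₂ ⊆ 𝒜 := Set.subset_union_right.trans hA
    have hB₁d : D.dom B₁ ⊆ ℬ := Set.subset_union_left.trans hB
    have hB₂d : D.dom B₂ ⊆ ℬ := Set.subset_union_right.trans hB
    have dAA : D.dom (A₁ ∩ gA) ∪ D.dom (A₂ ∩ kA) ⊆
        𝒜 ∪ (causalPast 𝒜 \ (𝒜 ∪ causalPast ℬ)) :=
      Set.union_subset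
        (Stmt17Aux.dom_inter_subset D hA₁ fsgA.1 hA₁d fsgA.2.2.1 Stmt17Aux.disj_A_LA)
        (Stmt17Aux.dom_inter_subset D hA₂ fskA.1 hA₂d fskA.2.2.1 Stmt17Aux.disj_A_LA)
    have dBB : D.dom (B₁ ∩ gB) ∪ D.dom (B₂ ∩ kB) ⊆
        ℬ ∪ (causalPast ℬ \ (ℬ ∪ causalPast 𝒜)) :=
      Set.union_subset
        (Stmt17Aux.dom_inter_subset D hB₁ fsgB.1 hB₁d fsgB.2.2.1 Stmt17Aux.disj_A_LA)
        (Stmt17Aux.dom_inter_subset D hB₂ fskB.1 hB₂d fskB.2.2.1 Stmt17Aux.disj_A_LA)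
    have dLA : D.dom gA ∪ D.dom kA ⊆ 𝒜 ∪ (causalPast 𝒜 \ (𝒜 ∪ causalPast ℬ)) :=
      Set.union_subset (fsgA.2.2.1.trans Set.subset_union_right)
        (fskA.2.2.1.trans Set.subset_union_right)
    have dLB : D.dom gB ∪ D.dom kB ⊆ ℬ ∪ (causalPast ℬ \ (ℬ ∪ causalPast 𝒜)) :=
      Set.union_subset (fsgB.2.2.1.trans Set.subset_union_right)
        (fskB.2.2.1.trans Set.subset_union_right)
    have e1 := hQ (A₁ ∩ gA) (A₂ ∩ kA) (B₁ ∩ gB) (B₂ ∩ kB)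
      (hA₁.inter fsgA.1) (hA₂.inter fskA.1) (hB₁.inter fsgB.1) (hB₂.inter fskB.1)
      _ _ dAA dBB hsp' (g1 ×ˢ k1) hC'
    have e2 := hQ (A₁ ∩ gA) (A₂ ∩ kA) gB kB
      (hA₁.inter fsgA.1) (hA₂.inter fskA.1) fsgB.1 fskB.1
      _ _ dAA dLB hsp' (g1 ×ˢ k1) hC'
    have e3 := hQ gA kA (B₁ ∩ gB) (B₂ ∩ kB)
      fsgA.1 fskA.1 (hB₁.inter fsgB.1) (hB₂.inter fskB.1)
      _ _ dLA dBB hsp' (g1 ×ˢ k1) hC'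
    have e4 := hQ gA kA gB kB fsgA.1 fskA.1 fsgB.1 fskB.1
      _ _ dLA dLB hsp' (g1 ×ˢ k1) hC'
    have E1 : (A₁ ∩ gA) ×ˢ (A₂ ∩ kA) ∩ (B₁ ∩ gB) ×ˢ (B₂ ∩ kB) ∩ g1 ×ˢ k1 =
        A₁ ×ˢ A₂ ∩ B₁ ×ˢ B₂ ∩ (g1 ∩ (gA ∩ gB)) ×ˢ (k1 ∩ (kA ∩ kB)) := by
      ext ⟨x, y⟩
      simp only [Set.mem_inter_iff, Set.mem_prod]
      tauto
    have E2 : (A₁ ∩ gA) ×ˢ (A₂ ∩ kA) ∩ gB ×ˢ kB ∩ g1 ×ˢ k1 =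
        A₁ ×ˢ A₂ ∩ (g1 ∩ (gA ∩ gB)) ×ˢ (k1 ∩ (kA ∩ kB)) := by
      ext ⟨x, y⟩
      simp only [Set.mem_inter_iff, Set.mem_prod]
      tauto
    have E3 : gA ×ˢ kA ∩ (B₁ ∩ gB) ×ˢ (B₂ ∩ kB) ∩ g1 ×ˢ k1 =
        B₁ ×ˢ B₂ ∩ (g1 ∩ (gA ∩ gB)) ×ˢ (k1 ∩ (kA ∩ kB)) := by
      ext ⟨x, y⟩
      simp only [Set.mem_inter_iff, Set.mem_prod]
      tauto
    have E4 : gA ×ˢ kA ∩ gB ×ˢ kB ∩ g1 ×ˢ k1 =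
        (g1 ∩ (gA ∩ gB)) ×ˢ (k1 ∩ (kA ∩ kB)) := by
      ext ⟨x, y⟩
      simp only [Set.mem_inter_iff, Set.mem_prod]
      tauto
    rw [E1] at e1
    rw [E2] at e2
    rw [E3] at e3
    rw [E4] at e4
    have hc' : μh (g1 ×ˢ k1) ≠ 0 :=
      hnz (causalPast 𝒜 ∩ causalPast ℬ) _ ⟨g1, k1, fsg1, fsk1, rfl⟩
    refine mul_right_cancel₀ (mul_ne_zero hc' hc') ?_
    linear_combination (μh ((g1 ∩ (gA ∩ gB)) ×ˢ (k1 ∩ (kA ∩ kB))) * μh (g1 ×ˢ k1)) * e1 +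
      (μh ((A₁ ∩ gA) ×ˢ (A₂ ∩ kA) ∩ g1 ×ˢ k1) * μh ((B₁ ∩ gB) ×ˢ (B₂ ∩ kB) ∩ g1 ×ˢ k1)) * e4 -
      (μh (B₁ ×ˢ B₂ ∩ (g1 ∩ (gA ∩ gB)) ×ˢ (k1 ∩ (kA ∩ kB))) * μh (g1 ×ˢ k1)) * e2 -
      (μh ((A₁ ∩ gA) ×ˢ (A₂ ∩ kA) ∩ g1 ×ˢ k1) * μh (gB ×ˢ kB ∩ g1 ×ˢ k1)) * e3
  · -- QSO2 → QSO1
    intro hQ A₁ A₂ B₁ B₂ hA₁ hA₂ hB₁ hB₂ 𝒜 ℬ hA hB hsp C hC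
    exact hQ A₁ A₂ B₁ B₂ hA₁ hA₂ hB₁ hB₂
      (𝒜 ∪ (causalPast 𝒜 \ (𝒜 ∪ causalPast ℬ)))
      (ℬ ∪ (causalPast ℬ \ (ℬ ∪ causalPast 𝒜)))
      (hA.trans Set.subset_union_left) (hB.trans Set.subset_union_left)
      (Stmt17Aux.spacelike_prime hsp) C
      (by rw [Stmt17Aux.jointPast_prime hsp]; exact hC)
end
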